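/- arXiv:2009.10581 — 2 statements merged into one kernel-verified Lean document; each statement's English description precedes it below -/
import Mathlib

section
/- For real t, s with 0 < t ≤ s, α > 0, and any integer l ≥ 0, the remainder of the Taylor polynomial of t ↦ t^(-α) at s satisfies 0 ≤ t^(-α) − P_l(t;s) ≤ t^(-α), where P_l(t;s) = ∑_{k=0}^{l} (∏_{j=0}^{k-1}(α+j)) / s^(α+k) · (s-t)^k / k!. -/
open Finset

/-!
With `x = (s - t) / s`, the Taylor series of `t ↦ t ^ (-α)` at `s` is `s ^ (-α)` times the binomial
series of `(1 - x) ^ (-α)`, which converges to `t ^ (-α)` for `|x| < 1`. For `α ≥ 0` and `t ≤ s`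
all its terms are nonnegative, so every partial sum lies between `0` and `t ^ (-α)`.
-/

theorem ascPochhammer_eval_eq_prod_range {R : Type*} [CommSemiring R] (n : ℕ) (r : R) :
    (ascPochhammer R n).eval r = ∏ j ∈ range n, (r + j) := by
  induction n with
  | zero => simp
  | succ n ih => rw [ascPochhammer_succ_eval, ih, prod_range_succ]

theorem Ring.choose_add_sub_one_eq_prod_div {K : Type*} [Field K] [CharZero K] (a : K) (n : ℕ) :
    Ring.choose (a + n - 1) n = (∏ j ∈ range n, (a + j)) / n.factorial := by
  rw [Ring.choose_eq_smul, Polynomial.descPochhammer_smeval_eq_ascPochhammer,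
    show a + n - 1 - n + 1 = a by ring, Polynomial.ascPochhammer_smeval_eq_eval,
    ascPochhammer_eval_eq_prod_range, smul_eq_mul, inv_mul_eq_div]

theorem Real.hasSum_one_sub_rpow_neg (a : ℝ) {x : ℝ} (hx : |x| < 1) :
    HasSum (fun n ↦ (∏ j ∈ range n, (a + j)) / n.factorial * x ^ n) ((1 - x) ^ (-a)) := by
  have hball : x ∈ Metric.eball (0 : ℝ) 1 := by
    simpa [Metric.mem_eball, edist_dist, Real.dist_eq] using hx
  have := (Real.one_div_one_sub_rpow_hasFPowerSeriesOnBall_zero a).hasSum hball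
  simp only [FormalMultilinearSeries.ofScalars_apply_eq, smul_eq_mul, zero_add,
    Ring.choose_add_sub_one_eq_prod_div] at this
  rwa [Real.rpow_neg (by linarith [le_abs_self x]), inv_eq_one_div]

theorem Real.hasSum_taylor_rpow_neg (α : ℝ) {s t : ℝ} (ht : 0 < t) (hts : t < 2 * s) :
    HasSum (fun k : ℕ ↦ (∏ j ∈ range k, (α + j)) / s ^ (α + k) * ((s - t) ^ k / k.factorial))
      (t ^ (-α)) := by
  have hs : 0 < s := by linarith
  have hx : |(s - t) / s| < 1 := by
    rw [abs_div, abs_of_pos hs, div_lt_one hs, abs_lt]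
    constructor <;> linarith
  have hterm (k : ℕ) : (∏ j ∈ range k, (α + j)) / s ^ (α + k) * ((s - t) ^ k / k.factorial) =
      s ^ (-α) * ((∏ j ∈ range k, (α + j)) / k.factorial * ((s - t) / s) ^ k) := by
    rw [Real.rpow_add hs, Real.rpow_natCast, Real.rpow_neg hs.le, div_pow]
    field_simp
  have hlim : s ^ (-α) * (1 - (s - t) / s) ^ (-α) = t ^ (-α) := by
    rw [← Real.mul_rpow hs.le (by linarith [le_abs_self ((s - t) / s)])]
    congr 1
    field_simp
    ring
  simpa only [hterm, hlim] using (Real.hasSum_one_sub_rpow_neg α hx).mul_left (s ^ (-α))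

/-- For `0 < t ≤ s`, `α > 0`, the remainder of the degree-`l` Taylor polynomial of
`t ↦ t^(-α)` at `s` satisfies `0 ≤ t^(-α) − P_l(t;s) ≤ t^(-α)`. -/
theorem taylor_remainder_bounds (α t s : ℝ) (hα : 0 < α) (ht : 0 < t) (hts : t ≤ s) (l : ℕ) :
    0 ≤ t ^ (-α) - ∑ k ∈ Finset.range (l + 1),
        (∏ j ∈ Finset.range k, (α + (j : ℝ))) / s ^ (α + (k : ℝ)) *
          ((s - t) ^ k / (k.factorial : ℝ)) ∧
    t ^ (-α) - ∑ k ∈ Finset.range (l + 1),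
        (∏ j ∈ Finset.range k, (α + (j : ℝ))) / s ^ (α + (k : ℝ)) *
          ((s - t) ^ k / (k.factorial : ℝ)) ≤ t ^ (-α) := by
  have hs : 0 < s := ht.trans_le hts
  have hterm_nonneg (k : ℕ) :
      0 ≤ (∏ j ∈ range k, (α + j)) / s ^ (α + k) * ((s - t) ^ k / k.factorial) := by
    have : 0 ≤ s - t := sub_nonneg.2 hts
    have : 0 ≤ ∏ j ∈ range k, (α + j) := prod_nonneg fun j _ ↦ by positivity
    positivity
  have hsum := Real.hasSum_taylor_rpow_neg α ht (by linarith)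
  exact ⟨sub_nonneg.2 (sum_le_hasSum _ (fun k _ ↦ hterm_nonneg k) hsum),
    sub_le_self _ (sum_nonneg fun k _ ↦ hterm_nonneg k)⟩
end

section
/- For fixed s > 0, α > 0, integers l ≥ 0 and 0 ≤ j ≤ l+1, and 0 < t ≤ s, the j-th derivative of f_{α,l}(t) = t^(-α) − P_l(t;s) satisfies |d^j/dt^j f_{α,l}(t)| ≤ |d^j/dt^j t^(-α)| = (∏_{i=0}^{j-1}(α+i)) t^(-(α+j)). -/
/-!
Write `R_{β,N}(t) = t^(-β) - (first N Taylor terms of t^(-β) at s)`. Termwise differentiation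
gives `R_{β,N+1}' = -β R_{β+1,N}`, so the `j`-th derivative of `R_{α,l+1}` is
`(-1)^j (∏_{i<j} (α+i)) R_{α+j,l+1-j}`, and it suffices to show `0 ≤ R_{β,N}(t) ≤ t^(-β)` for
`β ≥ 0` and `0 < t ≤ s`. The upper bound holds because every Taylor term is nonnegative for
`t ≤ s`. The lower bound follows by induction on `N`: `R_{β,N+1}` vanishes at `s` and its
derivative `-β R_{β+1,N}` is nonpositive on `(0, s]`.
-/

open Finset

-- `(d/dt)^m t^(-β) = (-1)^m (∏_{i<m} (β+i)) t^(-β-m)`, and the sign cancels against `(t - s)^m`.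
noncomputable def rpowNegTaylorPoly (β s : ℝ) (N : ℕ) (t : ℝ) : ℝ :=
  ∑ m ∈ range N, (∏ i ∈ range m, (β + i)) / s ^ (β + m) * ((s - t) ^ m / m.factorial)

noncomputable def rpowNegTaylorRemainder (β s : ℝ) (N : ℕ) (t : ℝ) : ℝ :=
  t ^ (-β) - rpowNegTaylorPoly β s N t

lemma prod_range_succ_add_cast (β : ℝ) (m : ℕ) :
    ∏ i ∈ range (m + 1), (β + i) = β * ∏ i ∈ range m, (β + 1 + i) := by
  rw [prod_range_succ', mul_comm]
  push_cast
  simp only [add_zero, add_assoc, add_comm (1 : ℝ)]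

lemma hasDerivAt_sub_pow_succ_div_factorial (s t : ℝ) (m : ℕ) :
    HasDerivAt (fun τ => (s - τ) ^ (m + 1) / (m + 1).factorial)
      (-((s - t) ^ m / m.factorial)) t := by
  refine ((((hasDerivAt_id t).const_sub s).pow (m + 1)).div_const _).congr_deriv ?_
  rw [Nat.factorial_succ, Nat.add_sub_cancel]
  push_cast
  field_simp
  rfl

lemma rpowNegTaylorPoly_succ_eq (β s : ℝ) (N : ℕ) (t : ℝ) :
    rpowNegTaylorPoly β s (N + 1) t = (s ^ β)⁻¹ +
      ∑ m ∈ range N, β * ((∏ i ∈ range m, (β + 1 + i)) / s ^ (β + 1 + m) *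
        ((s - t) ^ (m + 1) / (m + 1).factorial)) := by
  rw [rpowNegTaylorPoly, sum_range_succ', add_comm]
  congr 1
  · simp
  · refine sum_congr rfl fun m _ => ?_
    rw [prod_range_succ_add_cast]
    push_cast
    ring_nf

lemma hasDerivAt_rpowNegTaylorPoly_succ (β s : ℝ) (N : ℕ) (t : ℝ) :
    HasDerivAt (rpowNegTaylorPoly β s (N + 1)) (-β * rpowNegTaylorPoly (β + 1) s N t) t := by
  have hterm (m : ℕ) := ((hasDerivAt_sub_pow_succ_div_factorial s t m).const_mul
    ((∏ i ∈ range m, (β + 1 + i)) / s ^ (β + 1 + m))).const_mul β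
  have := (HasDerivAt.fun_sum (u := range N) fun m _ => hterm m).const_add (s ^ β)⁻¹
  rw [funext (rpowNegTaylorPoly_succ_eq β s N)]
  refine this.congr_deriv ?_
  simp only [rpowNegTaylorPoly, mul_sum]
  exact sum_congr rfl fun m _ => by ring

lemma hasDerivAt_rpowNegTaylorRemainder_succ (β s : ℝ) (N : ℕ) {t : ℝ} (ht : 0 < t) :
    HasDerivAt (rpowNegTaylorRemainder β s (N + 1))
      (-β * rpowNegTaylorRemainder (β + 1) s N t) t := by
  refine ((Real.hasDerivAt_rpow_const (p := -β) (Or.inl ht.ne')).sub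
    (hasDerivAt_rpowNegTaylorPoly_succ β s N t)).congr_deriv ?_
  rw [rpowNegTaylorRemainder, neg_add, ← sub_eq_add_neg]
  ring

lemma rpowNegTaylorRemainder_succ_self (β : ℝ) {s : ℝ} (hs : 0 ≤ s) (N : ℕ) :
    rpowNegTaylorRemainder β s (N + 1) s = 0 := by
  simp [rpowNegTaylorRemainder, rpowNegTaylorPoly_succ_eq, Real.rpow_neg hs]

lemma rpowNegTaylorPoly_nonneg {β s t : ℝ} (hβ : 0 ≤ β) (ht : 0 ≤ t) (hts : t ≤ s) (N : ℕ) :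
    0 ≤ rpowNegTaylorPoly β s N t := by
  have hs : 0 ≤ s := ht.trans hts
  refine sum_nonneg fun m _ => mul_nonneg (div_nonneg ?_ (Real.rpow_nonneg hs _)) ?_
  · exact prod_nonneg fun i _ => by positivity
  · exact div_nonneg (pow_nonneg (sub_nonneg.2 hts) m) (Nat.cast_nonneg _)

lemma rpowNegTaylorRemainder_le_rpow_neg {β s t : ℝ} (hβ : 0 ≤ β) (ht : 0 ≤ t) (hts : t ≤ s)
    (N : ℕ) : rpowNegTaylorRemainder β s N t ≤ t ^ (-β) :=
  sub_le_self _ (rpowNegTaylorPoly_nonneg hβ ht hts N)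

lemma rpowNegTaylorRemainder_nonneg {β s t : ℝ} (hβ : 0 ≤ β) (ht : 0 < t) (hts : t ≤ s) (N : ℕ) :
    0 ≤ rpowNegTaylorRemainder β s N t := by
  induction N generalizing β t with
  | zero => simpa [rpowNegTaylorRemainder, rpowNegTaylorPoly] using Real.rpow_nonneg ht.le _
  | succ N ih =>
    have hderiv {x : ℝ} (hx : x ∈ Set.Icc t s) := hasDerivAt_rpowNegTaylorRemainder_succ β s N
      (ht.trans_le hx.1)
    have hanti : AntitoneOn (rpowNegTaylorRemainder β s (N + 1)) (Set.Icc t s) :=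
      antitoneOn_of_hasDerivWithinAt_nonpos (convex_Icc t s)
        (fun x hx => (hderiv hx).continuousAt.continuousWithinAt)
        (fun x hx => (hderiv (interior_subset hx)).hasDerivWithinAt) fun x hx => by
          rw [interior_Icc] at hx
          exact mul_nonpos_of_nonpos_of_nonneg (neg_nonpos.2 hβ)
            (ih (by linarith) (ht.trans hx.1) hx.2.le)
    simpa [rpowNegTaylorRemainder_succ_self β (ht.le.trans hts)] using
      hanti ⟨le_rfl, hts⟩ ⟨hts, le_rfl⟩ hts

lemma iteratedDeriv_rpowNegTaylorRemainder (β s : ℝ) {j N : ℕ} (hj : j ≤ N) {t : ℝ} (ht : 0 < t) :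
    iteratedDeriv j (rpowNegTaylorRemainder β s N) t =
      (-1) ^ j * (∏ i ∈ range j, (β + i)) * rpowNegTaylorRemainder (β + j) s (N - j) t := by
  induction j generalizing β N t with
  | zero => simp
  | succ j ih =>
    obtain ⟨N, rfl⟩ := Nat.exists_eq_add_of_lt hj
    have hderiv : deriv (rpowNegTaylorRemainder β s (j + N + 1)) =ᶠ[nhds t]
        fun x => -β * rpowNegTaylorRemainder (β + 1) s (j + N) x :=
      Filter.eventually_of_mem (Ioi_mem_nhds ht) fun x hx =>
        (hasDerivAt_rpowNegTaylorRemainder_succ β s (j + N) hx).deriv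
    rw [iteratedDeriv_succ', hderiv.iteratedDeriv_eq, iteratedDeriv_const_mul_field,
      ih (β + 1) (by omega) ht, prod_range_succ_add_cast, Nat.add_sub_add_right,
      show β + ((j + 1 : ℕ) : ℝ) = β + 1 + j by push_cast; ring]
    ring

theorem iteratedDeriv_taylor_remainder_bound_general (α s : ℝ) (hα : 0 < α)
    (l j : ℕ) (hj : j ≤ l + 1) (t : ℝ) (ht : 0 < t) (hts : t ≤ s) :
    |iteratedDeriv j (fun τ : ℝ => τ ^ (-α) - ∑ k ∈ Finset.range (l + 1),
        (∏ i ∈ Finset.range k, (α + (i : ℝ))) / s ^ (α + (k : ℝ)) *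
          ((s - τ) ^ k / (k.factorial : ℝ))) t|
      ≤ (∏ i ∈ Finset.range j, (α + (i : ℝ))) * t ^ (-(α + (j : ℝ))) := by
  change |iteratedDeriv j (rpowNegTaylorRemainder α s (l + 1)) t| ≤ _
  have hβ : 0 ≤ α + j := by positivity
  have hprod : 0 ≤ ∏ i ∈ range j, (α + (i : ℝ)) := prod_nonneg fun i _ => by positivity
  rw [iteratedDeriv_rpowNegTaylorRemainder α s hj ht, abs_mul, abs_mul, abs_pow, abs_neg,
    abs_one, one_pow, one_mul, abs_of_nonneg hprod,
    abs_of_nonneg (rpowNegTaylorRemainder_nonneg hβ ht hts _)]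
  exact mul_le_mul_of_nonneg_left (rpowNegTaylorRemainder_le_rpow_neg hβ ht.le hts _) hprod

/-- For `0 < t ≤ s` and `j ≤ l + 1`, the `j`-th derivative of the Taylor remainder
`f_{α,l}(t) = t^(-α) − P_l(t;s)` is bounded in absolute value by the `j`-th derivative
of `t^(-α)`, namely `(∏_{i<j}(α+i)) t^(-(α+j))`. -/
theorem iteratedDeriv_taylor_remainder_bound (α s : ℝ) (hs : 0 < s) (hα : 0 < α)
    (l j : ℕ) (hj : j ≤ l + 1) (t : ℝ) (ht : 0 < t) (hts : t ≤ s) :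
    |iteratedDeriv j (fun τ : ℝ => τ ^ (-α) - ∑ k ∈ Finset.range (l + 1),
        (∏ i ∈ Finset.range k, (α + (i : ℝ))) / s ^ (α + (k : ℝ)) *
          ((s - τ) ^ k / (k.factorial : ℝ))) t|
      ≤ (∏ i ∈ Finset.range j, (α + (i : ℝ))) * t ^ (-(α + (j : ℝ))) :=
  iteratedDeriv_taylor_remainder_bound_general α s hα l j hj t ht hts
end
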